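/- arXiv:1912.13004 — 3 statements merged into one kernel-verified Lean document; each statement's English description precedes it below -/
import Mathlib

section
/- Let 0 < h < h', let α* be a minimizer of T_h over [0, (s 0)²/2] with α* < (s 0)²/2, and let α** be a minimizer of T_{h'} over [0, (s 0)²/2]. Then α* < α**; that is, the minimizer of T_h is strictly monotonically increasing in h (as long as it is interior). -/
/-!
Write `T_h = f₁ + h f₂`. Comparing the two minimality inequalities `T_h(a) ≤ T_h(b)` and
`T_{h'}(b) ≤ T_{h'}(a)` gives `(h' - h)(f₂(b) - f₂(a)) ≤ 0`, so `a ≤ b` because `f₂` is strictly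
decreasing. Equality is excluded by first-order conditions: `f₁'(0) = 0` and `f₂' < 0` make
`T_h'(0) < 0`, so `a > 0` is an interior minimizer; if `b = a`, both `T_h'(a)` and `T_{h'}(a)`
vanish, forcing `(h' - h) f₂'(a) = 0`.
-/

/-- The PRO function `T_h(α) = f₁(α) + h·f₂(α)` for Tikhonov regularization. -/
noncomputable def proT (r : ℕ) (hr : 0 < r) (s : Fin r → ℝ) (h : ℝ) (α : ℝ) : ℝ :=
  α ^ 2 / (α + (s ⟨0, hr⟩) ^ 2) ^ 2 + h * ∑ i, (s i) ^ 4 / (α + (s i) ^ 2) ^ 2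

open Set

section MinimizerComparison

variable {f g : ℝ → ℝ} {S : Set ℝ} {h h' a b : ℝ}

theorem le_of_isMinOn_add_mul_of_strictAntiOn (hg : StrictAntiOn g S) (hhh' : h < h')
    (ha : a ∈ S) (hb : b ∈ S) (hamin : IsMinOn (fun x ↦ f x + h * g x) S a)
    (hbmin : IsMinOn (fun x ↦ f x + h' * g x) S b) : a ≤ b := by
  by_contra! hba
  have hgab : g a < g b := hg hb ha hba
  have h₁ : f a + h * g a ≤ f b + h * g b := hamin hb
  have h₂ : f b + h' * g b ≤ f a + h' * g a := hbmin ha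
  nlinarith [mul_pos (sub_pos.2 hhh') (sub_pos.2 hgab)]

theorem not_isLocalMin_add_mul {g' : ℝ} (hf : DifferentiableAt ℝ f a) (hg : HasDerivAt g g' a)
    (hg' : g' ≠ 0) (hhh' : h ≠ h') (ha : IsLocalMin (fun x ↦ f x + h * g x) a) :
    ¬IsLocalMin (fun x ↦ f x + h' * g x) a := fun ha' ↦ by
  have e₁ := ha.hasDerivAt_eq_zero (hf.hasDerivAt.add (hg.const_mul h))
  have e₂ := ha'.hasDerivAt_eq_zero (hf.hasDerivAt.add (hg.const_mul h'))
  have : (h - h') * g' = 0 := by linear_combination e₁ - e₂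
  exact (mul_ne_zero (sub_ne_zero.2 hhh') hg') this

end MinimizerComparison

theorem IsMinOn.hasDerivAt_nonneg_of_left_endpoint {f : ℝ → ℝ} {f' a b : ℝ} (hab : a < b)
    (hmin : IsMinOn f (Icc a b) a) (hf : HasDerivAt f f' a) : 0 ≤ f' := by
  have hcone : b - a ∈ posTangentConeAt (Icc a b) a :=
    sub_mem_posTangentConeAt_of_segment_subset (segment_eq_Icc hab.le ▸ Subset.rfl)
  have := hmin.localize.hasFDerivWithinAt_nonneg hf.hasDerivWithinAt hcone
  rw [ContinuousLinearMap.toSpanSingleton_apply, smul_eq_mul] at this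
  exact nonneg_of_mul_nonneg_right this (sub_pos.2 hab)

noncomputable def proF₁ (c α : ℝ) : ℝ := α ^ 2 / (α + c) ^ 2

noncomputable def proF₂ {ι : Type*} [Fintype ι] (s : ι → ℝ) (α : ℝ) : ℝ :=
  ∑ i, s i ^ 4 / (α + s i ^ 2) ^ 2

theorem proT_eq (r : ℕ) (hr : 0 < r) (s : Fin r → ℝ) (h : ℝ) :
    proT r hr s h = fun α ↦ proF₁ (s ⟨0, hr⟩ ^ 2) α + h * proF₂ s α := rfl

theorem hasDerivAt_proF₁_zero {c : ℝ} (hc : c ≠ 0) : HasDerivAt (proF₁ c) 0 0 := by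
  have := ((hasDerivAt_id' (0 : ℝ)).fun_pow 2).fun_div
    (((hasDerivAt_id' (0 : ℝ)).add_const c).fun_pow 2) (by simpa using hc)
  exact this.congr_deriv (by simp)

theorem differentiableAt_proF₁ {c α : ℝ} (hα : α + c ≠ 0) : DifferentiableAt ℝ (proF₁ c) α :=
  (differentiableAt_pow 2).fun_div (by fun_prop) (pow_ne_zero 2 hα)

section ProF₂

variable {ι : Type*} [Fintype ι] {s : ι → ℝ} {α : ℝ}

theorem hasDerivAt_proF₂ (hs : ∀ i, s i ≠ 0) (hα : 0 ≤ α) :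
    HasDerivAt (proF₂ s) (∑ i, -2 * s i ^ 4 / (α + s i ^ 2) ^ 3) α := by
  refine HasDerivAt.fun_sum fun i _ ↦ ?_
  have hpos : 0 < α + s i ^ 2 := by have := hs i; positivity
  refine ((hasDerivAt_const α (s i ^ 4)).fun_div (((hasDerivAt_id' α).add_const _).fun_pow 2)
    (by positivity)).congr_deriv ?_
  field_simp
  ring

theorem deriv_proF₂_neg [Nonempty ι] (hs : ∀ i, s i ≠ 0) (hα : 0 ≤ α) :
    deriv (proF₂ s) α < 0 := by
  rw [(hasDerivAt_proF₂ hs hα).deriv]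
  refine Finset.sum_neg (fun i _ ↦ ?_) Finset.univ_nonempty
  have hsi := hs i
  have hs₄ : 0 < s i ^ 4 := by positivity
  exact div_neg_of_neg_of_pos (by linarith) (by positivity)

theorem strictAntiOn_proF₂ [Nonempty ι] (hs : ∀ i, s i ≠ 0) : StrictAntiOn (proF₂ s) (Ici 0) :=
  strictAntiOn_of_deriv_neg (convex_Ici 0)
    (fun _ hx ↦ (hasDerivAt_proF₂ hs hx).continuousAt.continuousWithinAt)
    (fun _ hx ↦ deriv_proF₂_neg hs (interior_subset hx))

end ProF₂

theorem proT_minimizer_strictMono_in_h_general (r : ℕ) (hr : 0 < r) (s : Fin r → ℝ)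
    (hpos : ∀ i, 0 < s i)
    (h h' : ℝ) (hh : 0 < h) (hhh' : h < h')
    (a : ℝ) (ha : a ∈ Set.Icc (0 : ℝ) ((s ⟨0, hr⟩) ^ 2 / 2))
    (hamin : IsMinOn (proT r hr s h) (Set.Icc 0 ((s ⟨0, hr⟩) ^ 2 / 2)) a)
    (haint : a < (s ⟨0, hr⟩) ^ 2 / 2)
    (b : ℝ) (hb : b ∈ Set.Icc (0 : ℝ) ((s ⟨0, hr⟩) ^ 2 / 2))
    (hbmin : IsMinOn (proT r hr s h') (Set.Icc 0 ((s ⟨0, hr⟩) ^ 2 / 2)) b) :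
    a < b := by
  have : Nonempty (Fin r) := ⟨⟨0, hr⟩⟩
  have hs : ∀ i, s i ≠ 0 := fun i ↦ (hpos i).ne'
  have hF₂ (x : ℝ) (hx : 0 ≤ x) : HasDerivAt (proF₂ s) (deriv (proF₂ s) x) x :=
    (hasDerivAt_proF₂ hs hx).differentiableAt.hasDerivAt
  rw [proT_eq] at hamin hbmin
  have hab : a ≤ b := le_of_isMinOn_add_mul_of_strictAntiOn
    ((strictAntiOn_proF₂ hs).mono fun x hx ↦ hx.1) hhh' ha hb hamin hbmin
  have ha₀ : 0 < a := by
    refine ha.1.lt_of_ne' fun ha₀ ↦ ?_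
    subst ha₀
    have := hamin.hasDerivAt_nonneg_of_left_endpoint (ha.1.trans_lt haint)
      ((hasDerivAt_proF₁_zero (pow_pos (hpos _) 2).ne').add ((hF₂ 0 le_rfl).const_mul h))
    nlinarith [deriv_proF₂_neg hs le_rfl]
  refine hab.lt_of_ne fun hab ↦ ?_
  subst hab
  have hnhds : Icc 0 (s ⟨0, hr⟩ ^ 2 / 2) ∈ nhds a := Icc_mem_nhds ha₀ haint
  exact not_isLocalMin_add_mul (differentiableAt_proF₁ (by positivity)) (hF₂ a ha.1)
    (deriv_proF₂_neg hs ha.1).ne hhh'.ne (hamin.isLocalMin hnhds) (hbmin.isLocalMin hnhds)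

/-- If `0 < h < h'`, `α*` is an interior minimizer of `T_h` over
`[0, (s 0)²/2]` and `α**` is a minimizer of `T_{h'}` over the same interval, then
`α* < α**`: the minimizer is strictly monotonically increasing in `h`. -/
theorem proT_minimizer_strictMono_in_h (r : ℕ) (hr : 0 < r) (s : Fin r → ℝ)
    (hpos : ∀ i, 0 < s i) (hmax : ∀ i, s i ≤ s ⟨0, hr⟩)
    (h h' : ℝ) (hh : 0 < h) (hhh' : h < h')
    (a : ℝ) (ha : a ∈ Set.Icc (0 : ℝ) ((s ⟨0, hr⟩) ^ 2 / 2))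
    (hamin : IsMinOn (proT r hr s h) (Set.Icc 0 ((s ⟨0, hr⟩) ^ 2 / 2)) a)
    (haint : a < (s ⟨0, hr⟩) ^ 2 / 2)
    (b : ℝ) (hb : b ∈ Set.Icc (0 : ℝ) ((s ⟨0, hr⟩) ^ 2 / 2))
    (hbmin : IsMinOn (proT r hr s h') (Set.Icc 0 ((s ⟨0, hr⟩) ^ 2 / 2)) b) :
    a < b :=
  proT_minimizer_strictMono_in_h_general r hr s hpos h h' hh hhh' a ha hamin haint b hb hbmin
end

section
/- If 0 < h < 1/(27 r), then T_h is strictly increasing on the interval [(s 0)²/2, ∞); in particular deriv T_h α > 0 for every α ≥ (s 0)²/2. -/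
open Finset Set

lemma hasDerivAt_sq_div_add_sq (c α : ℝ) (hα : α + c ≠ 0) :
    HasDerivAt (fun x : ℝ => x ^ 2 / (x + c) ^ 2) (2 * α * c / (α + c) ^ 3) α := by
  have hnum : HasDerivAt (fun x : ℝ => x ^ 2) (2 * α) α := by
    simpa using hasDerivAt_pow 2 α
  have hden : HasDerivAt (fun x : ℝ => (x + c) ^ 2) (2 * (α + c)) α := by
    simpa using ((hasDerivAt_id α).add_const c).fun_pow 2
  refine (hnum.fun_div hden (pow_ne_zero 2 hα)).congr_deriv ?_
  field_simp
  ring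

lemma hasDerivAt_const_div_add_sq (k d α : ℝ) (hα : α + d ≠ 0) :
    HasDerivAt (fun x : ℝ => k / (x + d) ^ 2) (-(2 * k / (α + d) ^ 3)) α := by
  have hden : HasDerivAt (fun x : ℝ => (x + d) ^ 2) (2 * (α + d)) α := by
    simpa using ((hasDerivAt_id α).add_const d).fun_pow 2
  refine ((hasDerivAt_const α k).fun_div hden (pow_ne_zero 2 hα)).congr_deriv ?_
  field_simp
  ring

lemma monotoneOn_sq_div_add_cube (α : ℝ) :
    MonotoneOn (fun x : ℝ => x ^ 2 / (α + x) ^ 3) (Icc 0 (2 * α)) := by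
  rintro d ⟨hd, -⟩ c ⟨-, hc⟩ hdc
  rcases hd.eq_or_lt with rfl | hd
  · simpa using div_nonneg (sq_nonneg c) (pow_nonneg (by linarith) 3)
  have hα : 0 < α := by linarith
  have hc0 : 0 < c := hd.trans_le hdc
  rw [div_le_div_iff₀ (by positivity) (by positivity)]
  have hfactor : c ^ 2 * (α + d) ^ 3 - d ^ 2 * (α + c) ^ 3
      = (c - d) * (α ^ 3 * (c + d) + 3 * α ^ 2 * c * d - c ^ 2 * d ^ 2) := by ring
  have hcofactor : 0 ≤ α ^ 3 * (c + d) + 3 * α ^ 2 * c * d - c ^ 2 * d ^ 2 := by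
    have h2α : (0 : ℝ) ≤ 2 * α - c := by linarith
    have hcd : (0 : ℝ) ≤ c - d := by linarith
    nlinarith [mul_nonneg (mul_nonneg (mul_nonneg hc0.le hd.le) hd.le) h2α,
      mul_nonneg (mul_nonneg (mul_nonneg hα.le hc0.le) hd.le) hcd,
      mul_nonneg (mul_nonneg (mul_nonneg hα.le hc0.le) hd.le) h2α,
      mul_nonneg (mul_nonneg (sq_nonneg α) hd.le) h2α,
      mul_nonneg (mul_nonneg (mul_nonneg hα.le hα.le) hα.le) hcd]
  nlinarith [mul_nonneg (sub_nonneg.2 hdc) hcofactor]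

lemma sum_pow_four_div_add_sq_cube_le {ι : Type*} [Fintype ι] (s : ι → ℝ) {c α : ℝ}
    (hc : 0 ≤ c) (hs : ∀ i, s i ^ 2 ≤ c) (hcα : c ≤ 2 * α) :
    ∑ i, s i ^ 4 / (α + s i ^ 2) ^ 3 ≤ Fintype.card ι * (c ^ 2 / (α + c) ^ 3) := by
  have hterm : ∀ i ∈ (univ : Finset ι), s i ^ 4 / (α + s i ^ 2) ^ 3 ≤ c ^ 2 / (α + c) ^ 3 := by
    intro i _
    have := monotoneOn_sq_div_add_cube α ⟨sq_nonneg (s i), (hs i).trans hcα⟩ ⟨hc, hcα⟩ (hs i)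
    simpa only [← pow_mul] using this
  simpa [nsmul_eq_mul] using sum_le_card_nsmul univ _ _ hterm

lemma hasDerivAt_proT (r : ℕ) (hr : 0 < r) (s : Fin r → ℝ) (h : ℝ) {α : ℝ} (hα : 0 < α) :
    HasDerivAt (proT r hr s h)
      (2 * α * s ⟨0, hr⟩ ^ 2 / (α + s ⟨0, hr⟩ ^ 2) ^ 3
        - 2 * h * ∑ i, s i ^ 4 / (α + s i ^ 2) ^ 3) α := by
  have hsum : HasDerivAt (fun x : ℝ => ∑ i, s i ^ 4 / (x + s i ^ 2) ^ 2)
      (∑ i, -(2 * s i ^ 4 / (α + s i ^ 2) ^ 3)) α :=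
    HasDerivAt.fun_sum fun i _ => hasDerivAt_const_div_add_sq _ _ α (by positivity)
  refine ((hasDerivAt_sq_div_add_sq _ α (by positivity)).add (hsum.const_mul h)).congr_deriv ?_
  simp only [sum_neg_distrib, mul_div_assoc]
  rw [← mul_sum]
  ring

lemma proT_deriv_formula_pos (r : ℕ) (hr : 0 < r) (s : Fin r → ℝ)
    (hpos : ∀ i, 0 < s i) (hmax : ∀ i, s i ≤ s ⟨0, hr⟩) (h : ℝ) (hh : 0 < h)
    (hh' : h < 1 / (27 * r)) {α : ℝ} (hα : s ⟨0, hr⟩ ^ 2 / 2 ≤ α) :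
    0 < 2 * α * s ⟨0, hr⟩ ^ 2 / (α + s ⟨0, hr⟩ ^ 2) ^ 3
      - 2 * h * ∑ i, s i ^ 4 / (α + s i ^ 2) ^ 3 := by
  set c := s ⟨0, hr⟩ ^ 2
  have hc : 0 < c := pow_pos (hpos _) 2
  have hden : 0 < (α + c) ^ 3 := pow_pos (by linarith) 3
  have hsum := sum_pow_four_div_add_sq_cube_le s hc.le
    (fun i => pow_le_pow_left₀ (hpos i).le (hmax i) 2) (by linarith : c ≤ 2 * α)
  rw [Fintype.card_fin] at hsum
  have hhr : h * r < 1 / 27 := by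
    rw [lt_div_iff₀ (by positivity)] at hh'
    linarith
  have hkey : h * r * c < α := by nlinarith
  refine sub_pos.2 ?_
  calc 2 * h * ∑ i, s i ^ 4 / (α + s i ^ 2) ^ 3
      ≤ 2 * h * (r * (c ^ 2 / (α + c) ^ 3)) := by gcongr
    _ = 2 * (h * r * c) * c / (α + c) ^ 3 := by ring
    _ < 2 * α * c / (α + c) ^ 3 := by gcongr

/-- If `0 < h < 1/(27 r)`, then `T_h` is strictly increasing on
`[(s 0)²/2, ∞)`; in particular `deriv T_h α > 0` for every `α ≥ (s 0)²/2`. -/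
theorem proT_strictMono_on_tail (r : ℕ) (hr : 0 < r) (s : Fin r → ℝ)
    (hpos : ∀ i, 0 < s i) (hmax : ∀ i, s i ≤ s ⟨0, hr⟩)
    (h : ℝ) (hh : 0 < h) (hh' : h < 1 / (27 * r)) :
    StrictMonoOn (proT r hr s h) (Set.Ici ((s ⟨0, hr⟩) ^ 2 / 2)) ∧
    ∀ α : ℝ, (s ⟨0, hr⟩) ^ 2 / 2 ≤ α → 0 < deriv (proT r hr s h) α := by
  have hα_pos : ∀ α, s ⟨0, hr⟩ ^ 2 / 2 ≤ α → 0 < α := fun α hα =>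
    lt_of_lt_of_le (by have := hpos ⟨0, hr⟩; positivity) hα
  have hderiv_pos : ∀ α, s ⟨0, hr⟩ ^ 2 / 2 ≤ α → 0 < deriv (proT r hr s h) α := fun α hα => by
    rw [(hasDerivAt_proT r hr s h (hα_pos α hα)).deriv]
    exact proT_deriv_formula_pos r hr s hpos hmax h hh hh' hα
  refine ⟨strictMonoOn_of_deriv_pos (convex_Ici _) ?_ ?_, hderiv_pos⟩
  · exact fun α hα => (hasDerivAt_proT r hr s h (hα_pos α hα)).continuousAt.continuousWithinAt
  · rw [interior_Ici]
    exact fun α hα => hderiv_pos α (le_of_lt hα)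
end

section
/- Let ζ = (s 0)² / ∑_{i < r} (s i)². If 0 < h < ζ and α* ∈ (0, (s 0)²/2) is a minimizer of T_h over [0, (s 0)²/2], then α* ≤ (1 − (h/ζ)^(1/3))⁻¹ · (s 0)² · (h/ζ)^(1/3). -/
section Derivatives

variable {a : ℝ} (c : ℝ)

theorem hasDerivAt_add_const_sq :
    HasDerivAt (fun x : ℝ => (x + c) ^ 2) (2 * (a + c)) a := by
  simpa using ((hasDerivAt_id a).add_const c).fun_pow 2

theorem hasDerivAt_sq_div_add_const_sq (hne : a + c ≠ 0) :
    HasDerivAt (fun x : ℝ => x ^ 2 / (x + c) ^ 2) (2 * a * c / (a + c) ^ 3) a := by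
  refine ((hasDerivAt_pow 2 a).fun_div (hasDerivAt_add_const_sq c)
    (pow_ne_zero 2 hne)).congr_deriv ?_
  field_simp
  ring

theorem hasDerivAt_const_div_add_const_sq (k : ℝ) (hne : a + c ≠ 0) :
    HasDerivAt (fun x : ℝ => k / (x + c) ^ 2) (-(2 * k / (a + c) ^ 3)) a := by
  refine ((hasDerivAt_const a k).fun_div (hasDerivAt_add_const_sq c)
    (pow_ne_zero 2 hne)).congr_deriv ?_
  field_simp
  ring

end Derivatives

theorem sq_mul_sq_div_add_pow_three_le {a c : ℝ} (ha : 0 ≤ a) (hc : 0 < c) :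
    a ^ 2 * (c ^ 2 / (a + c) ^ 3) ≤ c := by
  rw [mul_div_assoc', div_le_iff₀ (by positivity)]
  have hsq : a ^ 2 ≤ (a + c) ^ 2 := pow_le_pow_left₀ ha (by linarith) 2
  have hcube : a ^ 2 * c ≤ (a + c) ^ 3 := by
    rw [pow_succ]
    exact mul_le_mul hsq (by linarith) hc.le (sq_nonneg _)
  nlinarith [mul_le_mul_of_nonneg_left hcube hc.le]

noncomputable def proTDeriv (r : ℕ) (hr : 0 < r) (s : Fin r → ℝ) (h : ℝ) (α : ℝ) : ℝ :=
  2 * α * s ⟨0, hr⟩ ^ 2 / (α + s ⟨0, hr⟩ ^ 2) ^ 3 - h * ∑ i, 2 * s i ^ 4 / (α + s i ^ 2) ^ 3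

section PRO

variable {r : ℕ} (hr : 0 < r) {s : Fin r → ℝ} {h α : ℝ}

theorem hasDerivAt_proT_s11 (hne : ∀ i, α + s i ^ 2 ≠ 0) :
    HasDerivAt (proT r hr s h) (proTDeriv r hr s h α) α := by
  have hsum : HasDerivAt (fun x : ℝ => ∑ i, s i ^ 4 / (x + s i ^ 2) ^ 2)
      (∑ i, -(2 * s i ^ 4 / (α + s i ^ 2) ^ 3)) α :=
    HasDerivAt.fun_sum fun i _ => hasDerivAt_const_div_add_const_sq _ _ (hne i)
  have := (hasDerivAt_sq_div_add_const_sq _ (hne ⟨0, hr⟩)).add (hsum.const_mul h)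
  rwa [Finset.sum_neg_distrib, mul_neg, ← sub_eq_add_neg] at this

theorem div_add_pow_three_le_of_proTDeriv_eq_zero (hpos : ∀ i, 0 < s i) (hα : 0 ≤ α)
    (hh : 0 ≤ h) (hd : proTDeriv r hr s h α = 0) :
    (α / (α + s ⟨0, hr⟩ ^ 2)) ^ 3 ≤ h * (∑ i, s i ^ 2) / s ⟨0, hr⟩ ^ 2 := by
  set σ := s ⟨0, hr⟩ ^ 2
  have hσ : 0 < σ := pow_pos (hpos _) 2
  have hstat : 2 * α * σ / (α + σ) ^ 3 = h * ∑ i, 2 * s i ^ 4 / (α + s i ^ 2) ^ 3 :=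
    sub_eq_zero.mp hd
  have hterm (i : Fin r) : α ^ 2 / 2 * (2 * s i ^ 4 / (α + s i ^ 2) ^ 3) ≤ s i ^ 2 := by
    have := sq_mul_sq_div_add_pow_three_le hα (pow_pos (hpos i) 2)
    convert this using 1
    ring
  rw [le_div_iff₀ hσ]
  calc (α / (α + σ)) ^ 3 * σ = α ^ 2 / 2 * (2 * α * σ / (α + σ) ^ 3) := by
        field_simp
    _ = h * ∑ i, α ^ 2 / 2 * (2 * s i ^ 4 / (α + s i ^ 2) ^ 3) := by
        rw [hstat, Finset.mul_sum, Finset.mul_sum, Finset.mul_sum]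
        ring_nf
    _ ≤ h * ∑ i, s i ^ 2 :=
        mul_le_mul_of_nonneg_left (Finset.sum_le_sum fun i _ => hterm i) hh

end PRO

theorem le_inv_one_sub_mul_mul_of_div_add_le {a σ t : ℝ} (ha : 0 ≤ a) (hσ : 0 < σ)
    (ht : t < 1) (hle : a / (a + σ) ≤ t) : a ≤ (1 - t)⁻¹ * σ * t := by
  rw [div_le_iff₀ (by linarith)] at hle
  rw [inv_mul_eq_div, div_mul_eq_mul_div, le_div_iff₀ (by linarith)]
  linarith

theorem proT_minimizer_upper_bound_general (r : ℕ) (hr : 0 < r) (s : Fin r → ℝ)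
    (hpos : ∀ i, 0 < s i)
    (ζ : ℝ) (hζ : ζ = (s ⟨0, hr⟩) ^ 2 / ∑ i, (s i) ^ 2)
    (h : ℝ) (hh : 0 < h) (hhζ : h < ζ)
    (a : ℝ) (ha : a ∈ Set.Ioo (0 : ℝ) ((s ⟨0, hr⟩) ^ 2 / 2))
    (hamin : IsMinOn (proT r hr s h) (Set.Icc 0 ((s ⟨0, hr⟩) ^ 2 / 2)) a) :
    a ≤ (1 - (h / ζ) ^ ((1 : ℝ) / 3))⁻¹ * (s ⟨0, hr⟩) ^ 2 * (h / ζ) ^ ((1 : ℝ) / 3) := by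
  obtain ⟨ha0, ha1⟩ := ha
  have hσ : 0 < s ⟨0, hr⟩ ^ 2 := pow_pos (hpos _) 2
  have hS : 0 < ∑ i, s i ^ 2 := Finset.sum_pos (fun i _ => pow_pos (hpos i) 2) ⟨⟨0, hr⟩, by simp⟩
  have hζ0 : 0 < ζ := hζ ▸ div_pos hσ hS
  have hderiv : proTDeriv r hr s h a = 0 :=
    (hamin.isLocalMin (Icc_mem_nhds ha0 ha1)).hasDerivAt_eq_zero
      (hasDerivAt_proT_s11 hr fun i => by have := pow_pos (hpos i) 2; linarith)
  have hcube : (a / (a + s ⟨0, hr⟩ ^ 2)) ^ 3 ≤ h / ζ := by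
    rw [hζ, div_div_eq_mul_div]
    exact div_add_pow_three_le_of_proTDeriv_eq_zero hr hpos ha0.le hh.le hderiv
  have hroot : a / (a + s ⟨0, hr⟩ ^ 2) ≤ (h / ζ) ^ ((1 : ℝ) / 3) := by
    rw [one_div, Real.le_rpow_inv_iff_of_pos (by positivity) (by positivity) (by norm_num)]
    exact_mod_cast hcube
  refine le_inv_one_sub_mul_mul_of_div_add_le ha0.le hσ ?_ hroot
  exact Real.rpow_lt_one (by positivity) ((div_lt_one hζ0).mpr hhζ) (by norm_num)

/-- With `ζ = (s 0)² / ∑_{i<r} (s i)²`, if `0 < h < ζ` and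
`α* ∈ (0, (s 0)²/2)` is a minimizer of `T_h` over `[0, (s 0)²/2]`, then
`α* ≤ (1 − (h/ζ)^{1/3})⁻¹ · (s 0)² · (h/ζ)^{1/3}`. -/
theorem proT_minimizer_upper_bound (r : ℕ) (hr : 0 < r) (s : Fin r → ℝ)
    (hpos : ∀ i, 0 < s i) (hmax : ∀ i, s i ≤ s ⟨0, hr⟩)
    (ζ : ℝ) (hζ : ζ = (s ⟨0, hr⟩) ^ 2 / ∑ i, (s i) ^ 2)
    (h : ℝ) (hh : 0 < h) (hhζ : h < ζ)
    (a : ℝ) (ha : a ∈ Set.Ioo (0 : ℝ) ((s ⟨0, hr⟩) ^ 2 / 2))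
    (hamin : IsMinOn (proT r hr s h) (Set.Icc 0 ((s ⟨0, hr⟩) ^ 2 / 2)) a) :
    a ≤ (1 - (h / ζ) ^ ((1 : ℝ) / 3))⁻¹ * (s ⟨0, hr⟩) ^ 2 * (h / ζ) ^ ((1 : ℝ) / 3) :=
  proT_minimizer_upper_bound_general r hr s hpos ζ hζ h hh hhζ a ha hamin
end
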